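/- Assume I is a real interval centered at 0 with [−1,1] ⊆ I, and let f : Iⁿ → ℝ be a function with f(0) = 0 such that f restricted to I₊ⁿ or to I₋ⁿ is nonconstant. The following are equivalent: (i) f is a symmetric signed quasi-Choquet integral and there exists S ⊆ X with f(1_S) ≠ 0; (ii) f is comonotonically modular and there exists a nondecreasing odd function φ : I → ℝ such that f(x·1_S) = φ(x)·f(1_S) for every x ∈ I and every S ⊆ X. -/

import Mathlib

/-- `S↑_σ(i)` (0-indexed): the set `{σ(i), σ(i+1), …, σ(n-1)}`.  For `i = n` it is empty. -/
def SUp {n : ℕ} (σ : Equiv.Perm (Fin n)) (i : ℕ) : Finset (Fin n) :=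
  (Finset.univ.filter (fun j : Fin n => i ≤ (j : ℕ))).image σ

/-- `S↓_σ(i)`: the set `{σ(0), …, σ(i-1)}`.  For `i = 0` it is empty. -/
def SDown {n : ℕ} (σ : Equiv.Perm (Fin n)) (i : ℕ) : Finset (Fin n) :=
  (Finset.univ.filter (fun j : Fin n => (j : ℕ) < i)).image σ

/-- Two tuples are comonotonic if some permutation sorts both nondecreasingly. -/
def Comonotone {n : ℕ} (x y : Fin n → ℝ) : Prop :=
  ∃ σ : Equiv.Perm (Fin n), Monotone (x ∘ σ) ∧ Monotone (y ∘ σ)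

/-- The tuple `r·1_S`. -/
def indTuple {n : ℕ} (S : Finset (Fin n)) (r : ℝ) : Fin n → ℝ :=
  fun j => if j ∈ S then r else 0

/-- The signed Choquet integral of `x` w.r.t. `v`, computed via a sorting permutation. -/
noncomputable def Cv {n : ℕ} (v : Finset (Fin n) → ℝ) (x : Fin n → ℝ) : ℝ :=
  ∑ i : Fin n,
    x (Tuple.sort x i) *
      (v (SUp (Tuple.sort x) (i : ℕ)) - v (SUp (Tuple.sort x) ((i : ℕ) + 1)))

/-- `f` is the restriction to `Iⁿ` of a signed Choquet integral. -/
def IsSignedChoquetOn {n : ℕ} (I : Set ℝ) (f : (Fin n → ℝ) → ℝ) : Prop :=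
  ∃ v : Finset (Fin n) → ℝ, v ∅ = 0 ∧
    ∀ σ : Equiv.Perm (Fin n), ∀ x : Fin n → ℝ, (∀ i, x i ∈ I) → Monotone (x ∘ σ) →
      f x = ∑ i : Fin n, x (σ i) * (v (SUp σ (i : ℕ)) - v (SUp σ ((i : ℕ) + 1)))

/-- `f` is the restriction to `Iⁿ` of a symmetric signed Choquet integral
`Č_v(x) = C_v(x⁺) - C_v(x⁻)`. -/
def IsSymSignedChoquetOn {n : ℕ} (I : Set ℝ) (f : (Fin n → ℝ) → ℝ) : Prop :=
  ∃ v : Finset (Fin n) → ℝ, v ∅ = 0 ∧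
    ∀ x : Fin n → ℝ, (∀ i, x i ∈ I) →
      f x = Cv v (fun i => max (x i) 0) - Cv v (fun i => max (-x i) 0)

/-- Comonotonic modularity (on tuples with entries in `D`). -/
def ComonModularOn {n : ℕ} (D : Set ℝ) (f : (Fin n → ℝ) → ℝ) : Prop :=
  ∀ x y : Fin n → ℝ, (∀ i, x i ∈ D) → (∀ i, y i ∈ D) → Comonotone x y →
    f x + f y = f (fun i => min (x i) (y i)) + f (fun i => max (x i) (y i))

/-- Comonotonic additivity (on tuples with entries in `D`). -/
def ComonAdditiveOn {n : ℕ} (D : Set ℝ) (f : (Fin n → ℝ) → ℝ) : Prop :=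
  ∀ x y : Fin n → ℝ, (∀ i, x i ∈ D) → (∀ i, y i ∈ D) → Comonotone x y →
    (∀ i, x i + y i ∈ D) → f (fun i => x i + y i) = f x + f y

/-- Comonotonic maxitivity. -/
def ComonMaxitiveOn {n : ℕ} (D : Set ℝ) (f : (Fin n → ℝ) → ℝ) : Prop :=
  ∀ x y : Fin n → ℝ, (∀ i, x i ∈ D) → (∀ i, y i ∈ D) → Comonotone x y →
    f (fun i => max (x i) (y i)) = max (f x) (f y)

/-- Comonotonic minitivity. -/
def ComonMinitiveOn {n : ℕ} (D : Set ℝ) (f : (Fin n → ℝ) → ℝ) : Prop :=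
  ∀ x y : Fin n → ℝ, (∀ i, x i ∈ D) → (∀ i, y i ∈ D) → Comonotone x y →
    f (fun i => min (x i) (y i)) = min (f x) (f y)

/-- Horizontal min-additivity. -/
def HorizMinAdditiveOn {n : ℕ} (D : Set ℝ) (f : (Fin n → ℝ) → ℝ) : Prop :=
  ∀ x : Fin n → ℝ, (∀ i, x i ∈ D) → ∀ c ∈ D, (∀ i, x i - min (x i) c ∈ D) →
    f x = f (fun i => min (x i) c) + f (fun i => x i - min (x i) c)

/-- Horizontal max-additivity. -/
def HorizMaxAdditiveOn {n : ℕ} (D : Set ℝ) (f : (Fin n → ℝ) → ℝ) : Prop :=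
  ∀ x : Fin n → ℝ, (∀ i, x i ∈ D) → ∀ c ∈ D, (∀ i, x i - max (x i) c ∈ D) →
    f x = f (fun i => max (x i) c) + f (fun i => x i - max (x i) c)

/-- Horizontal median-additivity (for `I` centered at `0`). -/
def HorizMedAdditiveOn {n : ℕ} (I : Set ℝ) (f : (Fin n → ℝ) → ℝ) : Prop :=
  ∀ x : Fin n → ℝ, (∀ i, x i ∈ I) → ∀ c ∈ I, 0 ≤ c →
    f x = f (fun i => max (-c) (min (x i) c)) + f (fun i => x i - min (x i) c)
        + f (fun i => x i - max (x i) (-c))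

/-- Invariance under horizontal min-differences (for domains of nonnegative tuples). -/
def InvHMinDiffOn {n : ℕ} (D : Set ℝ) (f : (Fin n → ℝ) → ℝ) : Prop :=
  ∀ x : Fin n → ℝ, (∀ i, x i ∈ D) → ∀ c ∈ D,
    f x - f (fun i => min (x i) c) =
      f (fun i => if x i ≤ c then 0 else x i) -
        f (fun i => min (if x i ≤ c then 0 else x i) c)

/-- Invariance under horizontal max-differences (for domains of nonpositive tuples). -/
def InvHMaxDiffOn {n : ℕ} (D : Set ℝ) (f : (Fin n → ℝ) → ℝ) : Prop :=
  ∀ x : Fin n → ℝ, (∀ i, x i ∈ D) → ∀ c ∈ D,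
    f x - f (fun i => max (x i) c) =
      f (fun i => if c ≤ x i then 0 else x i) -
        f (fun i => max (if c ≤ x i then 0 else x i) c)

/-- `⋀_{i ∈ S} x i`, with the convention that the empty infimum is `b`. -/
noncomputable def infWith {n : ℕ} (b : ℝ) (S : Finset (Fin n)) (x : Fin n → ℝ) : ℝ :=
  if h : S.Nonempty then S.inf' h x else b

/-- An `[a,b]`-valued capacity. -/
def IsCapacityOn {n : ℕ} (a b : ℝ) (μ : Finset (Fin n) → ℝ) : Prop :=
  μ ∅ = a ∧ μ Finset.univ = b ∧ ∀ S T : Finset (Fin n), S ⊆ T → μ S ≤ μ T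

/-- `f` is nondecreasing (in each argument) on tuples with entries in `D`. -/
def NondecreasingOn {n : ℕ} (D : Set ℝ) (f : (Fin n → ℝ) → ℝ) : Prop :=
  ∀ x y : Fin n → ℝ, (∀ i, x i ∈ D) → (∀ i, y i ∈ D) → (∀ i, x i ≤ y i) → f x ≤ f y

/-!
For a sorted nonnegative tuple `x`, comonotonic modularity applied to `x·1_{S_{k+1}}` and
`x_{σ(k)}·1_{S_k}` peels off one level at a time: `f` telescopes into the differences
`f(x_{σ(k)} 1_{S_k}) - f(x_{σ(k)} 1_{S_{k+1}})`, which the scaling property turns into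
`φ(x_{σ(k)}) (v(S_k) - v(S_{k+1}))` with `v(S) = f(1_S)`, i.e. into `C_v(φ ∘ x)`. A general tuple
is split at `0` by modularity again. Conversely, `C_v` is modular along a common sorting
permutation because `min` and `max` then act termwise, and `Č_v(c·1_S) = c·v(S)` gives the scaling
function `φ / φ(1)`; nonconstancy of `f` is what excludes `v = 0`.
-/

open Finset Equiv

section SUp

variable {n : ℕ} (σ : Perm (Fin n))

theorem mem_SUp {k : ℕ} {j : Fin n} : j ∈ SUp σ k ↔ k ≤ (σ.symm j : ℕ) := by
  simp only [SUp, mem_image, mem_filter, mem_univ, true_and]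
  exact ⟨by rintro ⟨i, hi, rfl⟩; simpa using hi, fun h => ⟨σ.symm j, h, σ.apply_symm_apply j⟩⟩

@[simp]
theorem SUp_zero : SUp σ 0 = univ := by
  ext j; simp [mem_SUp]

theorem SUp_of_le {k : ℕ} (h : n ≤ k) : SUp σ k = ∅ := by
  ext j; simp only [mem_SUp, notMem_empty, iff_false, not_le]; omega

theorem SUp_eq_insert (k : Fin n) : SUp σ k = insert (σ k) (SUp σ (k + 1)) := by
  ext j
  obtain ⟨p, rfl⟩ := σ.surjective j
  simp only [mem_insert, mem_SUp, symm_apply_apply, σ.injective.eq_iff, Fin.ext_iff]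
  omega

theorem SUp_subset {S : Finset (Fin n)} (hS : ∀ i j, i ≤ j → σ i ∈ S → σ j ∈ S) {k : Fin n}
    (hk : σ k ∈ S) : SUp σ k ⊆ S := by
  intro j hj
  rw [mem_SUp] at hj
  simpa using hS k (σ.symm j) hj hk

theorem SUp_eq_filter {x : Fin n → ℝ} (hσ : Monotone (x ∘ σ)) {k : Fin n}
    (hk : ∀ i < k, x (σ i) < x (σ k)) : SUp σ k = univ.filter (fun j => x (σ k) ≤ x j) := by
  ext j
  obtain ⟨p, rfl⟩ := σ.surjective j
  simp only [mem_SUp, symm_apply_apply, mem_filter, mem_univ, true_and]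
  refine ⟨fun h => hσ (Fin.le_def.mpr h), fun h => ?_⟩
  by_contra hp
  exact (hk p (Fin.lt_def.mpr (not_le.mp hp))).not_ge h

end SUp

section ChoquetSum

variable {n : ℕ}

noncomputable def choquetSum (v : Finset (Fin n) → ℝ) (σ : Perm (Fin n)) (x : Fin n → ℝ) : ℝ :=
  ∑ i : Fin n, x (σ i) * (v (SUp σ i) - v (SUp σ (i + 1)))

theorem Cv_eq_choquetSum_sort (v : Finset (Fin n) → ℝ) (x : Fin n → ℝ) :
    Cv v x = choquetSum v (Tuple.sort x) x := rfl

noncomputable def padCons (y : Fin n → ℝ) : ℕ → ℝ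
  | 0 => 0
  | k + 1 => if h : k < n then y ⟨k, h⟩ else 0

theorem sum_range_mul_sub_succ (z g : ℕ → ℝ) (m : ℕ) :
    ∑ k ∈ range m, z (k + 1) * (g k - g (k + 1)) =
      z 0 * g 0 - z m * g m + ∑ k ∈ range m, (z (k + 1) - z k) * g k := by
  induction m with
  | zero => simp
  | succ m ih => rw [sum_range_succ, sum_range_succ, ih]; ring

/-- Abel summation; on the right, `σ` enters only through `x ∘ σ`, which is the same for every
sorting permutation, because a nonzero increment of the sorted values makes `SUp σ k` a level set
of `x`. -/
theorem choquetSum_eq_sum_levelSets (v : Finset (Fin n) → ℝ) (hv : v ∅ = 0) {σ : Perm (Fin n)}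
    {x : Fin n → ℝ} (hσ : Monotone (x ∘ σ)) :
    choquetSum v σ x = ∑ k ∈ range n, (padCons (x ∘ σ) (k + 1) - padCons (x ∘ σ) k) *
      v (univ.filter fun j => padCons (x ∘ σ) (k + 1) ≤ x j) := by
  set z := padCons (x ∘ σ)
  have hz : ∀ k : Fin n, z (k + 1) = x (σ k) := fun k => dif_pos k.isLt
  have hsum : choquetSum v σ x = ∑ k ∈ range n, z (k + 1) * (v (SUp σ k) - v (SUp σ (k + 1))) := by
    rw [choquetSum, ← Fin.sum_univ_eq_sum_range (fun k => z (k + 1) * _)]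
    simp only [hz]
  rw [hsum, sum_range_mul_sub_succ, SUp_of_le σ le_rfl, hv, mul_zero, sub_zero,
    show z 0 = 0 from rfl, zero_mul, zero_add]
  refine sum_congr rfl fun k hk => ?_
  have hk : k < n := mem_range.mp hk
  rw [hz ⟨k, hk⟩]
  rcases k with _ | k
  · rw [SUp_eq_filter σ hσ (k := ⟨0, hk⟩) fun i hi => absurd (Fin.lt_def.mp hi) (Nat.not_lt_zero _)]
  have hprev : z (k + 1) = x (σ ⟨k, by omega⟩) := hz ⟨k, by omega⟩
  rw [hprev]
  rcases (hσ (Fin.mk_le_mk.mpr k.le_succ : (⟨k, by omega⟩ : Fin n) ≤ ⟨k + 1, hk⟩)).eq_or_lt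
    with heq | hlt
  · simp only [Function.comp_apply] at heq
    rw [heq, sub_self, zero_mul, zero_mul]
  · rw [SUp_eq_filter σ hσ fun i hi => (hσ (Nat.le_of_lt_succ hi)).trans_lt hlt]

theorem choquetSum_eq_of_monotone (v : Finset (Fin n) → ℝ) (hv : v ∅ = 0) {σ τ : Perm (Fin n)}
    {x : Fin n → ℝ} (hσ : Monotone (x ∘ σ)) (hτ : Monotone (x ∘ τ)) :
    choquetSum v σ x = choquetSum v τ x := by
  have hστ : x ∘ σ = x ∘ τ := (Tuple.comp_sort_eq_comp_iff_monotone.mpr hσ).trans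
    (Tuple.comp_sort_eq_comp_iff_monotone.mpr hτ).symm
  rw [choquetSum_eq_sum_levelSets v hv hσ, choquetSum_eq_sum_levelSets v hv hτ, hστ]

theorem Cv_eq_choquetSum (v : Finset (Fin n) → ℝ) (hv : v ∅ = 0) {σ : Perm (Fin n)}
    {x : Fin n → ℝ} (hσ : Monotone (x ∘ σ)) : Cv v x = choquetSum v σ x :=
  choquetSum_eq_of_monotone v hv (Tuple.monotone_sort x) hσ

theorem Cv_indTuple (v : Finset (Fin n) → ℝ) (hv : v ∅ = 0) (S : Finset (Fin n)) {c : ℝ}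
    (hc : 0 ≤ c) : Cv v (indTuple S c) = c * v S := by
  rcases hc.eq_or_lt with rfl | hc
  · simp [Cv, indTuple]
  set σ := Tuple.sort (indTuple S c)
  have hup : ∀ i j, i ≤ j → σ i ∈ S → σ j ∈ S := by
    intro i j hij hi
    by_contra hj
    have : indTuple S c (σ i) ≤ indTuple S c (σ j) := Tuple.monotone_sort (indTuple S c) hij
    simp only [indTuple, if_pos hi, if_neg hj] at this
    exact hc.not_ge this
  have hterm : ∀ k : Fin n, indTuple S c (σ k) * (v (SUp σ k) - v (SUp σ (k + 1))) =
      c * (v (SUp σ k ∩ S) - v (SUp σ (k + 1) ∩ S)) := by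
    intro k
    by_cases hk : σ k ∈ S
    · have hsub := SUp_subset σ hup hk
      rw [SUp_eq_insert σ k] at hsub ⊢
      rw [indTuple, if_pos hk, inter_eq_left.mpr hsub,
        inter_eq_left.mpr ((subset_insert _ _).trans hsub)]
    · rw [indTuple, if_neg hk, SUp_eq_insert σ k, insert_inter_of_notMem hk, sub_self, zero_mul,
        mul_zero]
  rw [Cv_eq_choquetSum_sort, choquetSum, sum_congr rfl fun k _ => hterm k, ← mul_sum,
    Fin.sum_univ_eq_sum_range (fun k => v (SUp σ k ∩ S) - v (SUp σ (k + 1) ∩ S)), sum_range_sub',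
    SUp_zero, SUp_of_le σ le_rfl, univ_inter, empty_inter, hv, sub_zero]

theorem Cv_add_Cv_eq_Cv_min_add_Cv_max (v : Finset (Fin n) → ℝ) (hv : v ∅ = 0)
    {σ : Perm (Fin n)} {x y : Fin n → ℝ} (hx : Monotone (x ∘ σ)) (hy : Monotone (y ∘ σ)) :
    Cv v x + Cv v y = Cv v (fun i => min (x i) (y i)) + Cv v (fun i => max (x i) (y i)) := by
  rw [Cv_eq_choquetSum v hv hx, Cv_eq_choquetSum v hv hy,
    Cv_eq_choquetSum v hv (x := fun i => min (x i) (y i)) fun i j h => min_le_min (hx h) (hy h),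
    Cv_eq_choquetSum v hv (x := fun i => max (x i) (y i)) fun i j h => max_le_max (hx h) (hy h),
    choquetSum, choquetSum, choquetSum, choquetSum, ← sum_add_distrib, ← sum_add_distrib]
  refine sum_congr rfl fun i _ => ?_
  rw [← add_mul, ← add_mul, min_add_max]

theorem Cv_neg_left (v : Finset (Fin n) → ℝ) (x : Fin n → ℝ) :
    Cv (fun S => -v S) x = -Cv v x := by
  simp only [Cv, ← sum_neg_distrib]
  exact sum_congr rfl fun i _ => by ring

end ChoquetSum

section SymCv

variable {n : ℕ}

theorem Monotone.neg_comp_revPerm {x : Fin n → ℝ} {σ : Perm (Fin n)} (hx : Monotone (x ∘ σ)) :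
    Monotone ((fun i => -x i) ∘ (Fin.revPerm.trans σ)) :=
  fun _ _ hij => neg_le_neg (hx (Fin.rev_le_rev.mpr hij))

theorem Comonotone.neg {x y : Fin n → ℝ} (h : Comonotone x y) :
    Comonotone (fun i => -x i) (fun i => -y i) :=
  let ⟨_, hx, hy⟩ := h
  ⟨_, hx.neg_comp_revPerm, hy.neg_comp_revPerm⟩

/-- The symmetric signed Choquet integral `Č_v`. -/
noncomputable def symCv (v : Finset (Fin n) → ℝ) (x : Fin n → ℝ) : ℝ :=
  Cv v (fun i => max (x i) 0) - Cv v (fun i => max (-x i) 0)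

theorem symCv_indTuple (v : Finset (Fin n) → ℝ) (hv : v ∅ = 0) (S : Finset (Fin n)) (c : ℝ) :
    symCv v (indTuple S c) = c * v S := by
  have hpos : (fun i => max (indTuple S c i) 0) = indTuple S (max c 0) := by
    funext i; unfold indTuple; split_ifs <;> simp
  have hneg : (fun i => max (-indTuple S c i) 0) = indTuple S (max (-c) 0) := by
    funext i; unfold indTuple; split_ifs <;> simp
  rw [symCv, hpos, hneg, Cv_indTuple v hv S (le_max_right _ _),
    Cv_indTuple v hv S (le_max_right _ _), ← sub_mul, max_zero_sub_max_neg_zero_eq_self]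

/-- Both parts are comonotonically modular; the negative parts are sorted by the reversed
permutation, and taking parts exchanges `min` and `max` on the negative side. -/
theorem Comonotone.symCv_add_symCv (v : Finset (Fin n) → ℝ) (hv : v ∅ = 0) {x y : Fin n → ℝ}
    (h : Comonotone x y) :
    symCv v x + symCv v y =
      symCv v (fun i => min (x i) (y i)) + symCv v (fun i => max (x i) (y i)) := by
  obtain ⟨σ, hx, hy⟩ := h
  have hpos := Cv_add_Cv_eq_Cv_min_add_Cv_max v hv
    (x := fun i => max (x i) 0) (y := fun i => max (y i) 0)
    (fun _ _ hij => max_le_max_right 0 (hx hij)) (fun _ _ hij => max_le_max_right 0 (hy hij))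
  have hneg := Cv_add_Cv_eq_Cv_min_add_Cv_max v hv
    (x := fun i => max (-x i) 0) (y := fun i => max (-y i) 0)
    (fun _ _ hij => max_le_max_right 0 (hx.neg_comp_revPerm hij))
    (fun _ _ hij => max_le_max_right 0 (hy.neg_comp_revPerm hij))
  simp only [← max_min_distrib_right, max_max_max_comm _ (0 : ℝ), max_self, min_neg_neg,
    max_neg_neg] at hpos hneg
  simp only [symCv]
  linarith

end SymCv

section ComonModular

variable {n : ℕ} {I : Set ℝ} {f : (Fin n → ℝ) → ℝ}

theorem ComonModularOn.comp_neg (hsymm : ∀ t ∈ I, -t ∈ I) (hmod : ComonModularOn I f) :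
    ComonModularOn I (fun z => f (fun i => -z i)) := by
  intro x y hx hy hxy
  have := hmod _ _ (fun i => hsymm _ (hx i)) (fun i => hsymm _ (hy i)) hxy.neg
  simp only [min_neg_neg, max_neg_neg] at this
  linarith

theorem ComonModularOn.eq_add_of_zero_mem (h0 : 0 ∈ I) (hmod : ComonModularOn I f)
    (hf0 : f (fun _ => 0) = 0) {x : Fin n → ℝ} (hx : ∀ i, x i ∈ I) :
    f x = f (fun i => max (x i) 0) + f (fun i => -max (-x i) 0) := by
  have := hmod x (fun _ => 0) hx (fun _ => h0)
    ⟨Tuple.sort x, Tuple.monotone_sort x, monotone_const⟩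
  have hmin : (fun i => min (x i) 0) = fun i => -max (-x i) 0 := by
    funext i; rw [← neg_zero, max_neg_neg, neg_neg, neg_zero]
  simp only [hmin, hf0] at this
  linarith

theorem ComonModularOn.sub_restrict_SUp_succ (h0 : 0 ∈ I) (hmod : ComonModularOn I f)
    {x : Fin n → ℝ} (hxI : ∀ i, x i ∈ I) (hx0 : ∀ i, 0 ≤ x i) {σ : Perm (Fin n)}
    (hσ : Monotone (x ∘ σ)) (k : Fin n) :
    f (fun j => if j ∈ SUp σ k then x j else 0) - f (fun j => if j ∈ SUp σ (k + 1) then x j else 0)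
      = f (indTuple (SUp σ k) (x (σ k))) - f (indTuple (SUp σ (k + 1)) (x (σ k))) := by
  set c := x (σ k)
  have hc : ∀ p : Fin n, k ≤ p → c ≤ x (σ p) := fun p h => hσ h
  have hmin : (fun j => min (indTuple (SUp σ k) c j) (if j ∈ SUp σ (k + 1) then x j else 0)) =
      indTuple (SUp σ (k + 1)) c := by
    funext j
    obtain ⟨p, rfl⟩ := σ.surjective j
    simp only [indTuple, mem_SUp, symm_apply_apply]
    split_ifs with h1 h2
    · exact min_eq_left (hc p h1)
    · exact min_eq_right (hx0 _)
    · omega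
    · exact min_self 0
  have hmax : (fun j => max (indTuple (SUp σ k) c j) (if j ∈ SUp σ (k + 1) then x j else 0)) =
      fun j => if j ∈ SUp σ k then x j else 0 := by
    funext j
    obtain ⟨p, rfl⟩ := σ.surjective j
    simp only [indTuple, mem_SUp, symm_apply_apply]
    split_ifs with h1 h2
    · exact max_eq_right (hc p h1)
    · obtain rfl : p = k := Fin.ext (by omega)
      exact max_eq_left (hx0 _)
    · omega
    · exact max_self 0
  have hcomon :
      Comonotone (indTuple (SUp σ k) c) (fun j => if j ∈ SUp σ (k + 1) then x j else 0) := by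
    refine ⟨σ, fun p q hpq => ?_, fun p q hpq => ?_⟩ <;>
      simp only [Function.comp_apply, indTuple, mem_SUp, symm_apply_apply] <;>
      split_ifs <;> first | rfl | omega | exact hx0 _ | exact hσ hpq
  have := hmod _ _ (fun j => by unfold indTuple; split_ifs; exacts [hxI _, h0])
    (fun j => by split_ifs; exacts [hxI _, h0]) hcomon
  rw [hmin, hmax] at this
  linarith

theorem ComonModularOn.eq_sum_of_nonneg (h0 : 0 ∈ I) (hmod : ComonModularOn I f)
    (hf0 : f (fun _ => 0) = 0) {x : Fin n → ℝ} (hxI : ∀ i, x i ∈ I) (hx0 : ∀ i, 0 ≤ x i)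
    {σ : Perm (Fin n)} (hσ : Monotone (x ∘ σ)) :
    f x = ∑ k : Fin n,
      (f (indTuple (SUp σ k) (x (σ k))) - f (indTuple (SUp σ (k + 1)) (x (σ k)))) := by
  set X : ℕ → Fin n → ℝ := fun k j => if j ∈ SUp σ k then x j else 0
  have hX0 : X 0 = x := by simp [X]
  have hXn : X n = fun _ => 0 := by simp [X, SUp_of_le σ le_rfl]
  calc f x = f (X 0) - f (X n) := by rw [hX0, hXn, hf0, sub_zero]
    _ = ∑ k ∈ range n, (f (X k) - f (X (k + 1))) := (sum_range_sub' (fun k => f (X k)) n).symm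
    _ = _ := by
      rw [← Fin.sum_univ_eq_sum_range (fun k => f (X k) - f (X (k + 1)))]
      exact sum_congr rfl fun k _ => hmod.sub_restrict_SUp_succ h0 hxI hx0 hσ k

theorem ComonModularOn.eq_Cv_of_nonneg (h0 : 0 ∈ I) (hmod : ComonModularOn I f)
    (hf0 : f (fun _ => 0) = 0) {v : Finset (Fin n) → ℝ} (hv : v ∅ = 0) {φ : ℝ → ℝ}
    (hφ : MonotoneOn φ I) (hscale : ∀ c ∈ I, 0 ≤ c → ∀ S, f (indTuple S c) = φ c * v S)
    {x : Fin n → ℝ} (hxI : ∀ i, x i ∈ I) (hx0 : ∀ i, 0 ≤ x i) :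
    f x = Cv v (fun i => φ (x i)) := by
  have hσ := Tuple.monotone_sort x
  rw [hmod.eq_sum_of_nonneg h0 hf0 hxI hx0 hσ,
    Cv_eq_choquetSum v hv (x := fun i => φ (x i)) fun _ _ hij => hφ (hxI _) (hxI _) (hσ hij)]
  refine sum_congr rfl fun k _ => ?_
  rw [hscale _ (hxI _) (hx0 _), hscale _ (hxI _) (hx0 _), mul_sub]

end ComonModular

section QuasiChoquet

variable {n : ℕ} {I : Set ℝ} {f : (Fin n → ℝ) → ℝ} {v : Finset (Fin n) → ℝ} {φ : ℝ → ℝ}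

theorem ComonModularOn.of_eq_symCv_comp (hv : v ∅ = 0) (hφ : MonotoneOn φ I)
    (hf : ∀ x : Fin n → ℝ, (∀ i, x i ∈ I) → f x = symCv v (fun i => φ (x i))) :
    ComonModularOn I f := by
  rintro x y hx hy ⟨σ, hxσ, hyσ⟩
  have hmin : ∀ i, min (x i) (y i) ∈ I := fun i => min_rec' (· ∈ I) (hx i) (hy i)
  have hmax : ∀ i, max (x i) (y i) ∈ I := fun i => max_rec' (· ∈ I) (hx i) (hy i)
  have hφxy : Comonotone (fun i => φ (x i)) (fun i => φ (y i)) :=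
    ⟨σ, fun _ _ h => hφ (hx _) (hx _) (hxσ h), fun _ _ h => hφ (hy _) (hy _) (hyσ h)⟩
  rw [hf x hx, hf y hy, hf _ hmin, hf _ hmax, hφxy.symCv_add_symCv v hv]
  simp only [hφ.map_min (hx _) (hy _), hφ.map_max (hx _) (hy _)]

theorem apply_indTuple_of_eq_symCv_comp (h0 : 0 ∈ I) (hv : v ∅ = 0) (hφ0 : φ 0 = 0)
    (hf : ∀ x : Fin n → ℝ, (∀ i, x i ∈ I) → f x = symCv v (fun i => φ (x i)))
    {c : ℝ} (hc : c ∈ I) (S : Finset (Fin n)) : f (indTuple S c) = φ c * v S := by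
  have hφS : (fun i => φ (indTuple S c i)) = indTuple S (φ c) := by
    funext i; unfold indTuple; split_ifs <;> simp [hφ0]
  rw [hf _ fun i => by unfold indTuple; split_ifs; exacts [hc, h0], hφS, symCv_indTuple v hv]

theorem indTuple_empty (c : ℝ) : indTuple (∅ : Finset (Fin n)) c = fun _ => 0 :=
  funext fun _ => if_neg (notMem_empty _)

theorem indTuple_neg (S : Finset (Fin n)) (c : ℝ) :
    (fun i => -indTuple S c i) = indTuple S (-c) := by
  funext i; unfold indTuple; split_ifs <;> simp

/-- The negative part is handled by the representation of `z ↦ f (-z)` on nonnegative tuples: as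
`φ` is odd, its scaling function is `φ` again, with the capacity `-v`. -/
theorem ComonModularOn.eq_symCv_comp (hsymm : ∀ t ∈ I, -t ∈ I) (h0 : 0 ∈ I)
    (hmod : ComonModularOn I f) (hf0 : f (fun _ => 0) = 0) (hφ : MonotoneOn φ I)
    (hφodd : ∀ t ∈ I, φ (-t) = -φ t)
    (hscale : ∀ c ∈ I, ∀ S, f (indTuple S c) = φ c * f (indTuple S 1))
    {x : Fin n → ℝ} (hx : ∀ i, x i ∈ I) :
    f x = symCv (fun S => f (indTuple S 1)) (fun i => φ (x i)) := by
  set v : Finset (Fin n) → ℝ := fun S => f (indTuple S 1)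
  have hv : v ∅ = 0 := by simp only [v, indTuple_empty, hf0]
  have hφ0 : φ 0 = 0 := by linarith [neg_zero (G := ℝ) ▸ hφodd 0 h0]
  have hxpos : ∀ i, max (x i) 0 ∈ I := fun i => max_rec' (· ∈ I) (hx i) h0
  have hxneg : ∀ i, max (-x i) 0 ∈ I := fun i => max_rec' (· ∈ I) (hsymm _ (hx i)) h0
  have hpos : f (fun i => max (x i) 0) = Cv v (fun i => max (φ (x i)) 0) := by
    rw [hmod.eq_Cv_of_nonneg h0 hf0 hv hφ (fun c hc _ S => hscale c hc S) hxpos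
      fun i => le_max_right _ _]
    simp only [hφ.map_max (hx _) h0, hφ0]
  have hneg : f (fun i => -max (-x i) 0) = -Cv v (fun i => max (-φ (x i)) 0) := by
    have hg0 : f (fun _ => -0) = 0 := by simpa using hf0
    have hgscale : ∀ c ∈ I, 0 ≤ c → ∀ S, f (fun i => -indTuple S c i) = φ c * -v S := by
      intro c hc _ S
      rw [indTuple_neg, hscale _ (hsymm c hc), hφodd c hc, neg_mul_comm]
    rw [(hmod.comp_neg hsymm).eq_Cv_of_nonneg h0 hg0 (v := fun S => -v S) (by simp [hv]) hφ
      hgscale hxneg fun i => le_max_right _ _, Cv_neg_left]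
    simp only [hφ.map_max (hsymm _ (hx _)) h0, hφ0, hφodd _ (hx _)]
  rw [hmod.eq_add_of_zero_mem h0 hf0 hx, hpos, hneg, symCv, sub_eq_add_neg]

end QuasiChoquet

theorem statement16_general (n : ℕ) (I : Set ℝ)
    (hsymm : ∀ x : ℝ, x ∈ I → -x ∈ I) (h11 : Set.Icc (-1 : ℝ) 1 ⊆ I)
    (f : (Fin n → ℝ) → ℝ) (hf0 : f (fun _ => 0) = 0)
    (hnc :
      (∃ x y : Fin n → ℝ, (∀ i, x i ∈ I ∩ Set.Ici 0) ∧ (∀ i, y i ∈ I ∩ Set.Ici 0) ∧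
          f x ≠ f y) ∨
      (∃ x y : Fin n → ℝ, (∀ i, x i ∈ I ∩ Set.Iic 0) ∧ (∀ i, y i ∈ I ∩ Set.Iic 0) ∧
          f x ≠ f y)) :
    ((∃ v : Finset (Fin n) → ℝ, ∃ φ : ℝ → ℝ, v ∅ = 0 ∧
        (∀ y ∈ I, ∀ z ∈ I, y ≤ z → φ y ≤ φ z) ∧ (∀ y ∈ I, φ (-y) = -φ y) ∧
        ∀ x : Fin n → ℝ, (∀ i, x i ∈ I) →
          f x = Cv v (fun i => max (φ (x i)) 0) - Cv v (fun i => max (-φ (x i)) 0)) ∧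
      ∃ S : Finset (Fin n), f (indTuple S 1) ≠ 0)
    ↔
    (ComonModularOn I f ∧
      ∃ φ : ℝ → ℝ, (∀ y ∈ I, ∀ z ∈ I, y ≤ z → φ y ≤ φ z) ∧ (∀ y ∈ I, φ (-y) = -φ y) ∧
        ∀ x ∈ I, ∀ S : Finset (Fin n), f (indTuple S x) = φ x * f (indTuple S 1)) := by
  have h0 : (0 : ℝ) ∈ I := h11 ⟨by norm_num, by norm_num⟩
  have h1 : (1 : ℝ) ∈ I := h11 ⟨by norm_num, by norm_num⟩
  constructor
  · rintro ⟨⟨v, φ, hv, hφ, hφodd, hf⟩, S₀, hS₀⟩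
    have hφ0 : φ 0 = 0 := by linarith [neg_zero (G := ℝ) ▸ hφodd 0 h0]
    have hscale : ∀ c ∈ I, ∀ S, f (indTuple S c) = φ c * v S :=
      fun c hc => apply_indTuple_of_eq_symCv_comp h0 hv hφ0 hf hc
    have hφ1 : 0 < φ 1 := hφ0 ▸ (hφ 0 h0 1 h1 zero_le_one).lt_of_ne' fun h =>
      hS₀ (by rw [hscale 1 h1, h, hφ0, zero_mul])
    refine ⟨ComonModularOn.of_eq_symCv_comp hv hφ hf, fun t => φ t / φ 1,
      fun y hy z hz hyz => div_le_div_of_nonneg_right (hφ y hy z hz hyz) hφ1.le,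
      fun y hy => by simp only [hφodd y hy, neg_div], fun c hc S => ?_⟩
    rw [hscale c hc, hscale 1 h1]
    field_simp
  · rintro ⟨hmod, φ, hφ, hφodd, hscale⟩
    have hf : ∀ x : Fin n → ℝ, (∀ i, x i ∈ I) →
        f x = symCv (fun S => f (indTuple S 1)) (fun i => φ (x i)) :=
      fun x hx => hmod.eq_symCv_comp hsymm h0 hf0 hφ hφodd hscale hx
    refine ⟨⟨_, φ, by rw [indTuple_empty, hf0], hφ, hφodd, hf⟩, ?_⟩
    by_contra! hzero
    have hfzero : ∀ x : Fin n → ℝ, (∀ i, x i ∈ I) → f x = 0 := fun x hx => by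
      simp [hf x hx, hzero, symCv, Cv]
    rcases hnc with ⟨x, y, hx, hy, hne⟩ | ⟨x, y, hx, hy, hne⟩ <;>
      exact hne (by rw [hfzero x fun i => (hx i).1, hfzero y fun i => (hy i).1])

theorem statement16 (n : ℕ) (hn : 0 < n) (I : Set ℝ) (hI : I.OrdConnected)
    (hsymm : ∀ x : ℝ, x ∈ I → -x ∈ I) (h11 : Set.Icc (-1 : ℝ) 1 ⊆ I)
    (f : (Fin n → ℝ) → ℝ) (hf0 : f (fun _ => 0) = 0)
    (hnc :
      (∃ x y : Fin n → ℝ, (∀ i, x i ∈ I ∩ Set.Ici 0) ∧ (∀ i, y i ∈ I ∩ Set.Ici 0) ∧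
          f x ≠ f y) ∨
      (∃ x y : Fin n → ℝ, (∀ i, x i ∈ I ∩ Set.Iic 0) ∧ (∀ i, y i ∈ I ∩ Set.Iic 0) ∧
          f x ≠ f y)) :
    ((∃ v : Finset (Fin n) → ℝ, ∃ φ : ℝ → ℝ, v ∅ = 0 ∧
        (∀ y ∈ I, ∀ z ∈ I, y ≤ z → φ y ≤ φ z) ∧ (∀ y ∈ I, φ (-y) = -φ y) ∧
        ∀ x : Fin n → ℝ, (∀ i, x i ∈ I) →
          f x = Cv v (fun i => max (φ (x i)) 0) - Cv v (fun i => max (-φ (x i)) 0)) ∧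
      ∃ S : Finset (Fin n), f (indTuple S 1) ≠ 0)
    ↔
    (ComonModularOn I f ∧
      ∃ φ : ℝ → ℝ, (∀ y ∈ I, ∀ z ∈ I, y ≤ z → φ y ≤ φ z) ∧ (∀ y ∈ I, φ (-y) = -φ y) ∧
        ∀ x ∈ I, ∀ S : Finset (Fin n), f (indTuple S x) = φ x * f (indTuple S 1)) :=
  statement16_general n I hsymm h11 f hf0 hnc
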